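/- arXiv:1402.1156 — 2 statements merged into one kernel-verified Lean document; each statement's English description precedes it below -/
import Mathlib

section
/- For the cellular game G₂, G₂ ⊨ a ∥ b if and only if |a − b| = 1 or |a − b| > 2. -/
structure CellularGame where
  S : Type
  u : S → S → S → ℝ

def NashEq (G : CellularGame) (e : ℤ → G.S) : Prop :=
  ∀ (i : ℤ) (s : G.S), G.u (e (i-1)) s (e (i+1)) ≤ G.u (e (i-1)) (e i) (e (i+1))

def Ichg (G : CellularGame) (a b : ℤ) : Prop :=
  ∀ e₁ e₂ : ℤ → G.S, NashEq G e₁ → NashEq G e₂ →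
    ∃ e : ℤ → G.S, NashEq G e ∧ e a = e₁ a ∧ e b = e₂ b

abbrev G2S := ZMod 3 ⊕ (Bool × Bool)

def u1 (x y z : G2S) : ℝ :=
  match x, y, z with
  | Sum.inl a, Sum.inr _, Sum.inl c => if c = a + 2 then 1 else 0
  | _, Sum.inr _, _ => 1
  | _, _, _ => 0

def u2 (x y : G2S) : ℝ :=
  match x, y with
  | Sum.inr (_, x2), Sum.inr (y1, _) => if x2 = y1 then 1 else 0
  | _, _ => 0

def u3 (y z : G2S) : ℝ :=
  match y, z with
  | Sum.inr (_, y2), Sum.inr (z1, _) => if y2 ≠ z1 then 1 else 0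
  | _, _ => 0

def G2 : CellularGame := ⟨G2S, fun x y z => u1 x y z + u2 x y + u3 y z⟩

/-! Playing a value in `ZMod 3` pays nothing, while switching to a pennies strategy pays at least 1
unless both neighbours play values `x, z` with `z ≠ x + 2`; and two neighbouring pennies players
can never both be content. So the Nash equilibria are the value profiles `c` with
`c (i + 2) - c i ∈ {0, 1}`, and `a ∥ b` says that the values of such a `c` at `a` and at `b` can be
prescribed independently. This fails for `a = b`, and for `|a - b| = 2` since `c (i + 2) - c i ≠ 2`.
For odd `a - b` the two positions lie in different parity classes, which do not interact; for even
`|a - b| ≥ 4` the sequence can climb from the one value to the other in at most two steps. -/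

def CellularGame.IsBestResponse (G : CellularGame) (x y z : G.S) : Prop :=
  ∀ s, G.u x s z ≤ G.u x y z

lemma nashEq_iff_isBestResponse {G : CellularGame} {e : ℤ → G.S} :
    NashEq G e ↔ ∀ i, G.IsBestResponse (e (i - 1)) (e i) (e (i + 1)) :=
  Iff.rfl

def Admissible (c : ℤ → ZMod 3) : Prop :=
  ∀ i, c (i + 2) - c i = 0 ∨ c (i + 2) - c i = 1

lemma sub_eq_zero_or_sub_eq_one_iff (a b : ZMod 3) : b - a = 0 ∨ b - a = 1 ↔ b ≠ a + 2 := by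
  revert a b; decide

lemma admissible_iff_ne_add_two {c : ℤ → ZMod 3} : Admissible c ↔ ∀ i, c (i + 2) ≠ c i + 2 := by
  simp only [Admissible, sub_eq_zero_or_sub_eq_one_iff]

section G2Payoff

open Sum

lemma G2_u_apply (x y z : G2S) : G2.u x y z = u1 x y z + u2 x y + u3 y z := rfl

lemma G2_u_inl (x z : G2S) (b : ZMod 3) : G2.u x (inl b) z = 0 := by
  rcases x with _ | _ <;> rcases z with _ | _ <;> simp [G2_u_apply, u1, u2, u3]

lemma isBestResponse_inl_iff {x z : G2S} {b : ZMod 3} :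
    G2.IsBestResponse x (inl b) z ↔ ∃ a c, x = inl a ∧ z = inl c ∧ c ≠ a + 2 := by
  constructor
  · intro h
    have h' := h (inr (true, true))
    rw [G2_u_inl] at h'
    rcases x with a | _ <;> rcases z with c | _ <;> norm_num [G2_u_apply, u1, u2, u3] at h'
    · exact ⟨a, c, rfl, rfl, fun hc => by norm_num [hc] at h'⟩
    all_goals split_ifs at h' <;> norm_num at h'
  · rintro ⟨a, c, rfl, rfl, hc⟩ s
    rcases s with _ | _ <;> simp [G2_u_apply, u1, u2, u3, hc]

lemma isBestResponse_inl_inl_inl_iff {a b c : ZMod 3} :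
    G2.IsBestResponse (inl a) (inl b) (inl c) ↔ c ≠ a + 2 := by
  simp [isBestResponse_inl_iff]

/- Between two neighbouring `inr` players, the second Boolean of the left one and the first Boolean
of the right one are a game of matching pennies: the left player wants them to differ, the right
one wants them to agree. -/
lemma ne_of_isBestResponse_inr_inr {x : G2S} {p q r s : Bool}
    (h : G2.IsBestResponse x (inr (p, q)) (inr (r, s))) : q ≠ r := by
  rintro rfl
  have h' := h (inr (p, !q))
  rcases x with _ | _ <;> cases q <;> norm_num [G2_u_apply, u1, u2, u3] at h'

lemma eq_of_isBestResponse_inr_inr {z : G2S} {p q r s : Bool}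
    (h : G2.IsBestResponse (inr (p, q)) (inr (r, s)) z) : q = r := by
  by_contra hqr
  have h' := h (inr (q, s))
  rcases z with _ | _ <;> norm_num [G2_u_apply, u1, u2, u3, hqr] at h'

lemma NashEq.exists_eq_inl {e : ℤ → G2S} (he : NashEq G2 e) (i : ℤ) : ∃ c, e i = inl c := by
  replace he := nashEq_iff_isBestResponse.1 he
  rcases hi : e i with c | ⟨p, q⟩
  · exact ⟨c, rfl⟩
  have hnext := he (i + 1)
  rw [add_sub_cancel_right, hi] at hnext
  rcases hi' : e (i + 1) with b | ⟨r, s⟩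
  · rw [hi', isBestResponse_inl_iff] at hnext
    obtain ⟨_, _, h, -⟩ := hnext
    cases h
  · have hcur := he i
    rw [hi, hi'] at hcur
    rw [hi'] at hnext
    exact absurd (eq_of_isBestResponse_inr_inr hnext) (ne_of_isBestResponse_inr_inr hcur)

lemma nashEq_inl_iff {c : ℤ → ZMod 3} : NashEq G2 (fun i => inl (c i)) ↔ Admissible c := by
  refine nashEq_iff_isBestResponse.trans ?_
  simp only [isBestResponse_inl_inl_inl_iff, admissible_iff_ne_add_two]
  constructor
  · intro h i
    simpa [add_assoc] using h (i + 1)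
  · intro h i
    simpa [show i - 1 + 2 = i + 1 by ring] using h (i - 1)

lemma nashEq_G2_iff {e : ℤ → G2S} : NashEq G2 e ↔ ∃ c, Admissible c ∧ e = fun i => inl (c i) := by
  constructor
  · intro he
    choose c hc using he.exists_eq_inl
    obtain rfl : e = fun i => inl (c i) := funext hc
    exact ⟨c, nashEq_inl_iff.1 he, rfl⟩
  · rintro ⟨c, hc, rfl⟩
    exact nashEq_inl_iff.2 hc

end G2Payoff

def Decoupled (a b : ℤ) : Prop :=
  ∀ α β : ZMod 3, ∃ c, Admissible c ∧ c a = α ∧ c b = β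

lemma ichg_G2_iff {a b : ℤ} : Ichg G2 a b ↔ Decoupled a b := by
  constructor
  · intro h α β
    obtain ⟨e, he, hea, heb⟩ := h (fun _ => .inl α) (fun _ => .inl β)
      (nashEq_inl_iff.2 fun _ => by simp) (nashEq_inl_iff.2 fun _ => by simp)
    obtain ⟨c, hc, rfl⟩ := nashEq_G2_iff.1 he
    exact ⟨c, hc, Sum.inl_injective hea, Sum.inl_injective heb⟩
  · intro h e₁ e₂ h₁ h₂
    obtain ⟨c₁, -, rfl⟩ := nashEq_G2_iff.1 h₁
    obtain ⟨c₂, -, rfl⟩ := nashEq_G2_iff.1 h₂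
    obtain ⟨c, hc, hca, hcb⟩ := h (c₁ a) (c₂ b)
    exact ⟨_, nashEq_inl_iff.2 hc, by rw [hca], by rw [hcb]⟩

lemma Decoupled.symm {a b : ℤ} (h : Decoupled a b) : Decoupled b a := fun α β =>
  let ⟨c, hc, hca, hcb⟩ := h β α
  ⟨c, hc, hcb, hca⟩

lemma not_decoupled_self (a : ℤ) : ¬ Decoupled a a := fun h =>
  let ⟨_, _, h₀, h₁⟩ := h 0 1
  absurd (h₀.symm.trans h₁) (by decide)

lemma not_decoupled_add_two (a : ℤ) : ¬ Decoupled a (a + 2) := fun h =>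
  let ⟨_, hc, h₀, h₂⟩ := h 0 2
  admissible_iff_ne_add_two.1 hc a (by rw [h₀, h₂]; rfl)

lemma admissible_of_add_two_eq {c : ℤ → ZMod 3} (h : ∀ i, c (i + 2) = c i) : Admissible c :=
  fun i => .inl (by rw [h, sub_self])

lemma admissible_intCast {f : ℤ → ℤ} (hf : ∀ i, f (i + 2) = f i ∨ f (i + 2) = f i + 1) :
    Admissible fun i => (f i : ZMod 3) := by
  intro i
  rcases hf i with h | h <;> simp [h]

lemma decoupled_of_odd {a b : ℤ} (h : Odd (b - a)) : Decoupled a b := by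
  intro α β
  refine ⟨fun i => if Even (i - a) then α else β, admissible_of_add_two_eq fun i => ?_, by simp, ?_⟩
  · simp [show i + 2 - a = i - a + 2 by ring]
  · simp [Int.not_even_iff_odd.2 h]

/- Floor division makes `a + 2k` and `a + 2k + 1` share a value, which climbs from `α` by steps of `+1`
and has reached `β` by `k = 2`. -/
lemma decoupled_of_add_four_le {a b : ℤ} (h : a + 4 ≤ b) : Decoupled a b := by
  intro α β
  set t : ℤ := ((β - α).val : ℤ) with ht
  have ht2 : t ≤ 2 := by have := ZMod.val_lt (β - α); omega
  refine ⟨fun i => ((α.val + max 0 (min t ((i - a) / 2)) : ℤ) : ZMod 3),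
    admissible_intCast fun i => by omega, ?_, ?_⟩
  · simp
  · dsimp only
    rw [show max 0 (min t ((b - a) / 2)) = t by omega, ht]
    simp only [Int.cast_add, Int.cast_natCast, ZMod.natCast_zmod_val]
    ring

lemma decoupled_iff {a b : ℤ} : Decoupled a b ↔ |a - b| = 1 ∨ 2 < |a - b| := by
  have hdist : (|a - b| = 1 ∨ 2 < |a - b|) ↔ a ≠ b ∧ b ≠ a + 2 ∧ a ≠ b + 2 := by
    rcases abs_cases (a - b) with ⟨h, _⟩ | ⟨h, _⟩ <;> rw [h] <;> omega
  rw [hdist]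
  constructor
  · intro h
    refine ⟨?_, ?_, ?_⟩ <;> rintro rfl
    exacts [not_decoupled_self a h, not_decoupled_add_two a h, not_decoupled_add_two b h.symm]
  · rintro ⟨h₀, h₂, h₂'⟩
    rcases Int.even_or_odd (b - a) with ⟨k, hk⟩ | hodd
    · rcases le_or_gt a b with hab | hab
      · exact decoupled_of_add_four_le (by omega)
      · exact (decoupled_of_add_four_le (by omega)).symm
    · exact decoupled_of_odd hodd

theorem g2_inter (a b : ℤ) : Ichg G2 a b ↔ |a - b| = 1 ∨ 2 < |a - b| :=
  ichg_G2_iff.trans decoupled_iff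
end

section
/- Let n ≥ 3 and let ⟨x^i⟩_{i∈ℤ} be a Nash equilibrium of G_n with x^a_{1,2} = [0]. Then x^{a+n}_{1,2} ∈ {[0], [1], ..., [n−1]} in ℤ/(n+1)ℤ; in particular x^{a+n}_{1,2} ≠ [n]. -/
abbrev GnS (n : ℕ) := Fin (n-1) → ZMod (n+1) × ZMod (n+1)

def GnCond (n : ℕ) (x y z : GnS n) : Prop :=
  (∀ h0 : 0 < n - 1, (y ⟨0, h0⟩).1 = 0) ∧
  (∀ (j : ℕ) (h : j + 1 < n - 1),
    (y ⟨j+1, h⟩).2 + (z ⟨j+1, h⟩).1 - (x ⟨j, Nat.lt_of_succ_lt h⟩).2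
      - (y ⟨j, Nat.lt_of_succ_lt h⟩).1 ∈ ({0, 1} : Set (ZMod (n+1)))) ∧
  (∀ h : n - 2 < n - 1,
    (z ⟨0, lt_of_le_of_lt (Nat.zero_le _) h⟩).2 - (x ⟨n-2, h⟩).2 - (y ⟨n-2, h⟩).1
      ∈ ({0, 1} : Set (ZMod (n+1))))

open Classical in
noncomputable def GnGame (n : ℕ) : CellularGame :=
  ⟨GnS n, fun x y z => if GnCond n x y z then 1 else 0⟩

def SemiPerfect (n : ℕ) (s : ℤ → GnS n) (i : ℤ) : Prop :=
  GnCond n (s (i-1)) (s i) (s (i+1))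

def PerfectAt (n : ℕ) (s : ℤ → GnS n) (i : ℤ) : Prop :=
  (∀ h0 : 0 < n - 1, (s i ⟨0, h0⟩).1 = 0) ∧
  (∀ (j : ℕ) (h : j + 1 < n - 1),
    (s (i-1) ⟨j, Nat.lt_of_succ_lt h⟩).2 + (s i ⟨j, Nat.lt_of_succ_lt h⟩).1
      = (s i ⟨j+1, h⟩).2 + (s (i+1) ⟨j+1, h⟩).1) ∧
  (∀ h : n - 2 < n - 1,
    (s (i-1) ⟨n-2, h⟩).2 + (s i ⟨n-2, h⟩).1
      = (s (i+1) ⟨0, lt_of_le_of_lt (Nat.zero_le _) h⟩).2)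

/-- For any neighbours' strategies there is a reply achieving payoff 1. -/
lemma gn_exists_good (n : ℕ) (hn : 3 ≤ n) (x z : GnS n) : ∃ y : GnS n, GnCond n x y z := by
  have h2 : n - 2 < n - 1 := by omega
  have h0 : 0 < n - 1 := by omega
  refine ⟨fun j => (if (j : ℕ) = n - 2 then (z ⟨0, h0⟩).2 - (x ⟨n-2, h2⟩).2 else 0,
      if (j : ℕ) = 0 then 0 else
        (x ⟨(j : ℕ) - 1, Nat.lt_of_le_of_lt (Nat.sub_le _ _) j.isLt⟩).2 - (z j).1),
      ?_, ?_, ?_⟩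
  · intro _
    simp only [if_neg (show (0 : ℕ) ≠ n - 2 by omega)]
  · intro j h
    simp only [if_neg (show j + 1 ≠ 0 by omega), if_neg (show j ≠ n - 2 by omega),
      Nat.add_sub_cancel]
    left
    ring
  · intro h
    left
    dsimp only
    rw [if_pos rfl]
    ring

lemma nash_semiPerfect (n : ℕ) (hn : 3 ≤ n) (e : ℤ → (GnGame n).S)
    (he : NashEq (GnGame n) e) (i : ℤ) :
    GnCond n (e (i-1)) (e i) (e (i+1)) := by
  by_contra h
  obtain ⟨y, hy⟩ := gn_exists_good n hn (e (i-1)) (e (i+1))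
  have := he i y
  simp only [GnGame, if_pos hy, if_neg h] at this
  norm_num at this

theorem gn_post_diagonal (n : ℕ) (hn : 3 ≤ n) (e : ℤ → (GnGame n).S)
    (he : NashEq (GnGame n) e) (a : ℤ)
    (ha : (e a ⟨0, by omega⟩).2 = 0) :
    (∃ m : ℕ, m ≤ n - 1 ∧ (e (a + n) ⟨0, by omega⟩).2 = (m : ZMod (n+1))) ∧
      (e (a + n) ⟨0, by omega⟩).2 ≠ (n : ZMod (n+1)) := by
  have hsp := nash_semiPerfect n hn e he
  -- diagonal invariant
  have key : ∀ t : ℕ, (ht : t ≤ n - 2) → ∃ m : ℕ, m ≤ t ∧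
      (e (a + t) ⟨t, by omega⟩).2 + (e (a + t + 1) ⟨t, by omega⟩).1 = (m : ZMod (n+1)) := by
    intro t
    induction t with
    | zero =>
      intro ht
      refine ⟨0, le_refl _, ?_⟩
      have hA := (hsp (a + 1)).1 (by omega)
      simp only [Nat.cast_zero, add_zero]
      rw [ha, hA]
      simp
    | succ t ih =>
      intro ht
      obtain ⟨m, hm, hv⟩ := ih (by omega)
      have hB := (hsp (a + t + 1)).2.1 t (by omega)
      have h1 : a + (t : ℤ) + 1 - 1 = a + t := by ring
      rw [h1] at hB
      simp only [Set.mem_insert_iff, Set.mem_singleton_iff, sub_eq_zero] at hB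
      have hcast : a + ((t : ℕ) + 1 : ℕ) = a + (t : ℤ) + 1 := by push_cast; ring
      rcases hB with hB | hB
      · refine ⟨m, by omega, ?_⟩
        rw [hcast]
        have : (e (a + (t:ℤ) + 1) ⟨t+1, by omega⟩).2 + (e (a + (t:ℤ) + 1 + 1) ⟨t+1, by omega⟩).1
            = (e (a + (t:ℤ)) ⟨t, by omega⟩).2 + (e (a + (t:ℤ) + 1) ⟨t, by omega⟩).1 := by
          have := hB
          linear_combination this
        rw [this, hv]
      · refine ⟨m + 1, by omega, ?_⟩
        rw [hcast]
        have : (e (a + (t:ℤ) + 1) ⟨t+1, by omega⟩).2 + (e (a + (t:ℤ) + 1 + 1) ⟨t+1, by omega⟩).1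
            = (e (a + (t:ℤ)) ⟨t, by omega⟩).2 + (e (a + (t:ℤ) + 1) ⟨t, by omega⟩).1 + 1 := by
          linear_combination hB
        rw [this, hv]
        push_cast
        ring
  obtain ⟨m, hm, hv⟩ := key (n - 2) (le_refl _)
  have hC := (hsp (a + (n : ℤ) - 1)).2.2 (by omega)
  have h1 : a + (n : ℤ) - 1 - 1 = a + ((n - 2 : ℕ) : ℤ) := by omega
  have h2 : a + (n : ℤ) - 1 = a + ((n - 2 : ℕ) : ℤ) + 1 := by omega
  have h3 : a + (n : ℤ) - 1 + 1 = a + (n : ℤ) := by ring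
  rw [h3, h1] at hC
  rw [show a + (n : ℤ) - 1 = a + ((n-2:ℕ):ℤ) + 1 from h2] at hC
  simp only [Set.mem_insert_iff, Set.mem_singleton_iff, sub_eq_zero] at hC
  have hfinal : ∃ m' : ℕ, m' ≤ n - 1 ∧ (e (a + (n:ℤ)) ⟨0, by omega⟩).2 = (m' : ZMod (n+1)) := by
    rcases hC with hC | hC
    · exact ⟨m, by omega, by rw [show (e (a + (n:ℤ)) ⟨0, by omega⟩).2
        = (e (a + ((n-2:ℕ):ℤ)) ⟨n-2, by omega⟩).2 + (e (a + ((n-2:ℕ):ℤ) + 1) ⟨n-2, by omega⟩).1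
        from by linear_combination hC, hv]⟩
    · refine ⟨m + 1, by omega, ?_⟩
      have : (e (a + (n:ℤ)) ⟨0, by omega⟩).2
          = (e (a + ((n-2:ℕ):ℤ)) ⟨n-2, by omega⟩).2 + (e (a + ((n-2:ℕ):ℤ) + 1) ⟨n-2, by omega⟩).1 + 1 := by
        linear_combination hC
      rw [this, hv]; push_cast; ring
  refine ⟨hfinal, ?_⟩
  obtain ⟨m', hm', hv'⟩ := hfinal
  rw [hv']
  intro hcontra
  have hval := congrArg ZMod.val hcontra
  rw [ZMod.val_natCast_of_lt (by omega), ZMod.val_natCast_of_lt (by omega)] at hval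
  omega
end
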